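/- arXiv:2302.01754 — 2 statements merged into one kernel-verified Lean document; each statement's English description precedes it below -/
import Mathlib

section
/- Let H ∈ ℝ^{m×n}, G ∈ ℝ^{n×m} with HG invertible, and let V ∈ ℝ^{n×(n−m)} have full column rank with im V = ker H. Then the map Φ : ℝ^n → ℝ^m × ℝ^{n−m} given by Φ(x) = (Hx, V†(I_n − G(HG)^{−1}H)x), where V† is the Moore–Penrose pseudoinverse of V, is a linear bijection with inverse Φ^{−1}(y, η) = G(HG)^{−1}y + Vη. -/
open Matrix

lemma VtV_isUnit {n k : ℕ} (V : Matrix (Fin n) (Fin k) ℝ)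
    (hV_inj : Function.Injective V.mulVecLin) : IsUnit (Vᵀ * V) := by
  rw [← Matrix.mulVec_injective_iff_isUnit]
  have key : ∀ z : Fin k → ℝ, (Vᵀ * V).mulVec z = 0 → z = 0 := by
    intro z hz
    have h1 : z ⬝ᵥ (Vᵀ * V).mulVec z = 0 := by rw [hz]; simp
    rw [← Matrix.mulVec_mulVec, Matrix.dotProduct_mulVec, Matrix.vecMul_transpose] at h1
    have h2 : V.mulVec z = 0 := by
      funext i
      have h3 := (Finset.sum_eq_zero_iff_of_nonneg
        (fun i _ => mul_self_nonneg (V.mulVec z i))).mp h1 i (Finset.mem_univ i)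
      have : V.mulVec z i = 0 := by nlinarith
      simpa using this
    have := hV_inj (a₁ := z) (a₂ := 0) (by simpa using h2)
    simpa using this
  intro x y hxy
  have := key (x - y) (by rw [Matrix.mulVec_sub, hxy, sub_self])
  exact sub_eq_zero.mp this

/-- Byrnes–Isidori coordinate transformation for linear relative-degree-one systems:
with `HG` invertible and `V` of full column rank with `im V = ker H`, the map
`Φ(x) = (Hx, V†(I − G(HG)⁻¹H)x)` (with `V† = (VᵀV)⁻¹Vᵀ` the Moore–Penrose
pseudoinverse of a full-column-rank matrix) is a linear bijection with inverse
`(y, η) ↦ G(HG)⁻¹y + Vη`. Here `n = m + k`. -/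
theorem stmt_3 {m k : ℕ}
    (H : Matrix (Fin m) (Fin (m + k)) ℝ)
    (G : Matrix (Fin (m + k)) (Fin m) ℝ)
    (V : Matrix (Fin (m + k)) (Fin k) ℝ)
    (hHG : IsUnit (H * G))
    (hV_inj : Function.Injective V.mulVecLin)
    (hV_range : LinearMap.range V.mulVecLin = LinearMap.ker H.mulVecLin)
    (Vdag : Matrix (Fin k) (Fin (m + k)) ℝ)
    (hVdag : Vdag = (Vᵀ * V)⁻¹ * Vᵀ)
    (Φ : (Fin (m + k) → ℝ) → (Fin m → ℝ) × (Fin k → ℝ))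
    (hΦ : ∀ x, Φ x = (H.mulVec x, Vdag.mulVec ((1 - G * (H * G)⁻¹ * H).mulVec x))) :
    (∀ (a : ℝ) (x y : Fin (m + k) → ℝ), Φ (a • x + y) = a • Φ x + Φ y) ∧
    Function.Bijective Φ ∧
    (∀ (y : Fin m → ℝ) (η : Fin k → ℝ),
        Φ (G.mulVec ((H * G)⁻¹.mulVec y) + V.mulVec η) = (y, η)) ∧
    (∀ x : Fin (m + k) → ℝ,
        G.mulVec ((H * G)⁻¹.mulVec (Φ x).1) + V.mulVec (Φ x).2 = x) := by
  have hHGdet : IsUnit (H * G).det := (Matrix.isUnit_iff_isUnit_det _).mp hHG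
  have hHGinv : (H * G) * (H * G)⁻¹ = 1 := Matrix.mul_nonsing_inv _ hHGdet
  have hHGinv' : (H * G)⁻¹ * (H * G) = 1 := Matrix.nonsing_inv_mul _ hHGdet
  have hVtV : IsUnit (Vᵀ * V) := VtV_isUnit V hV_inj
  have hVtVdet : IsUnit (Vᵀ * V).det := (Matrix.isUnit_iff_isUnit_det _).mp hVtV
  have hVdagV : Vdag * V = 1 := by
    rw [hVdag, Matrix.mul_assoc, Matrix.nonsing_inv_mul _ hVtVdet]
  -- HV = 0
  have hHV : ∀ η, H.mulVec (V.mulVec η) = 0 := by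
    intro η
    have : V.mulVec η ∈ LinearMap.ker H.mulVecLin := by
      rw [← hV_range]; exact ⟨η, rfl⟩
    simpa using this
  -- linearity
  have hlin : ∀ (a : ℝ) (x y : Fin (m + k) → ℝ), Φ (a • x + y) = a • Φ x + Φ y := by
    intro a x y
    simp [hΦ, Matrix.mulVec_add, Matrix.mulVec_smul, Prod.ext_iff, Prod.smul_fst]
  -- key matrix identities
  have hGHG : G * (H * G)⁻¹ * H * G * (H * G)⁻¹ = G * (H * G)⁻¹ := by
    rw [Matrix.mul_assoc (G * (H * G)⁻¹) H G, Matrix.mul_assoc, hHGinv, Matrix.mul_one]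
  have hHGH : H * (G * (H * G)⁻¹ * H) = H := by
    rw [← Matrix.mul_assoc, ← Matrix.mul_assoc, hHGinv, Matrix.one_mul]
  -- left inverse
  have hleft : ∀ (y : Fin m → ℝ) (η : Fin k → ℝ),
      Φ (G.mulVec ((H * G)⁻¹.mulVec y) + V.mulVec η) = (y, η) := by
    intro y η
    rw [hΦ]
    have h1 : H.mulVec (G.mulVec ((H * G)⁻¹.mulVec y) + V.mulVec η) = y := by
      rw [Matrix.mulVec_add, hHV, add_zero, Matrix.mulVec_mulVec, Matrix.mulVec_mulVec,
        hHGinv, Matrix.one_mulVec]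
    have h2 : (1 - G * (H * G)⁻¹ * H).mulVec (G.mulVec ((H * G)⁻¹.mulVec y) + V.mulVec η)
        = V.mulVec η := by
      have ha : (G * (H * G)⁻¹ * H).mulVec (G.mulVec ((H * G)⁻¹.mulVec y))
          = G.mulVec ((H * G)⁻¹.mulVec y) := by
        rw [Matrix.mulVec_mulVec, Matrix.mulVec_mulVec, Matrix.mulVec_mulVec, hGHG]
      have hb : (G * (H * G)⁻¹ * H).mulVec (V.mulVec η) = 0 := by
        rw [← Matrix.mulVec_mulVec, hHV, Matrix.mulVec_zero]
      rw [Matrix.sub_mulVec, Matrix.one_mulVec, Matrix.mulVec_add, ha, hb]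
      abel
    rw [h1, h2, Matrix.mulVec_mulVec, hVdagV, Matrix.one_mulVec]
  -- right inverse
  have hright : ∀ x : Fin (m + k) → ℝ,
      G.mulVec ((H * G)⁻¹.mulVec (Φ x).1) + V.mulVec (Φ x).2 = x := by
    intro x
    rw [hΦ]
    set P := (1 - G * (H * G)⁻¹ * H) with hP
    have hker : P.mulVec x ∈ LinearMap.ker H.mulVecLin := by
      simp only [LinearMap.mem_ker, Matrix.mulVecLin_apply]
      rw [hP, Matrix.sub_mulVec, Matrix.one_mulVec, Matrix.mulVec_sub,
        Matrix.mulVec_mulVec, hHGH, sub_self]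
    rw [← hV_range] at hker
    obtain ⟨η, hη⟩ := hker
    simp only [Matrix.mulVecLin_apply] at hη
    have hVdagP : Vdag.mulVec (P.mulVec x) = η := by
      rw [← hη, Matrix.mulVec_mulVec, hVdagV, Matrix.one_mulVec]
    rw [hVdagP, hη, hP, Matrix.sub_mulVec, Matrix.one_mulVec, Matrix.mulVec_mulVec,
      Matrix.mulVec_mulVec]
    abel
  refine ⟨hlin, ⟨?_, ?_⟩, hleft, hright⟩
  · intro x y hxy
    have hx := hright x
    have hy := hright y
    rw [hxy] at hx
    rw [← hx, hy]
  · intro ⟨y, η⟩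
    exact ⟨G.mulVec ((H * G)⁻¹.mulVec y) + V.mulVec η, hleft y η⟩
end

section
/- Let A ∈ ℝ^{n×n}, B ∈ ℝ^{n×m}, C ∈ ℝ^{m×n} with CB invertible, and suppose the system is transformed (via the Byrnes–Isidori coordinates) so that the internal dynamics matrix Q ∈ ℝ^{(n−m)×(n−m)} arises. Then the minimum phase condition — det [λI − A, B; C, 0] ≠ 0 for all λ ∈ ℂ with Re λ ≥ 0 — implies that every eigenvalue λ of Q satisfies Re λ < 0. -/
open Matrix

/-!
An eigenvector `η` of `Q` for `λ` yields, in Byrnes–Isidori coordinates, the kernel vector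
`((0, η), (CB)⁻¹ S η)` of the Rosenbrock matrix at `λ`, so every eigenvalue of `Q` is an invariant
zero of the system. Invariant zeros do not depend on the state coordinates, because a coordinate
change `U` conjugates the Rosenbrock matrix by `diag(U, 1)`. Hence the minimum phase condition
keeps the eigenvalues of `Q` off the closed right half-plane.
-/

section Rosenbrock

variable {K n m k : Type*} [CommRing K] [Fintype n] [DecidableEq n] [Fintype m] [DecidableEq m]
  [Fintype k] [DecidableEq k]

def rosenbrockMatrix (lam : K) (A : Matrix n n K) (B : Matrix n m K) (C : Matrix m n K) :
    Matrix (n ⊕ m) (n ⊕ m) K :=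
  fromBlocks (lam • 1 - A) B C 0

theorem rosenbrockMatrix_conj (lam : K) (A : Matrix n n K) (B : Matrix n m K) (C : Matrix m n K)
    {U V : Matrix n n K} (hUV : U * V = 1) :
    rosenbrockMatrix lam (U * A * V) (U * B) (C * V) =
      fromBlocks U 0 0 1 * rosenbrockMatrix lam A B C * fromBlocks V 0 0 1 := by
  simp only [rosenbrockMatrix, fromBlocks_multiply, Matrix.mul_sub, Matrix.sub_mul,
    Matrix.mul_smul, Matrix.smul_mul, Matrix.mul_one, hUV, Matrix.mul_zero, Matrix.zero_mul,
    Matrix.one_mul, smul_zero, sub_zero, add_zero, zero_add]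

theorem det_rosenbrockMatrix_conj (lam : K) (A : Matrix n n K) (B : Matrix n m K)
    (C : Matrix m n K) {U V : Matrix n n K} (hUV : U * V = 1) :
    (rosenbrockMatrix lam (U * A * V) (U * B) (C * V)).det = (rosenbrockMatrix lam A B C).det := by
  have hdet : U.det * V.det = 1 := by rw [← det_mul, hUV, det_one]
  rw [rosenbrockMatrix_conj lam A B C hUV, det_mul, det_mul, det_fromBlocks_zero₂₁,
    det_fromBlocks_zero₂₁, det_one, mul_one, mul_one]
  linear_combination (rosenbrockMatrix lam A B C).det * hdet

theorem det_rosenbrockMatrix_byrnesIsidori_eq_zero [IsDomain K] {lam : K}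
    (R : Matrix m m K) (S : Matrix m k K) (P : Matrix k m K) {Q : Matrix k k K}
    {G : Matrix m m K} (hG : IsUnit G) (hQ : (lam • 1 - Q).det = 0) :
    (rosenbrockMatrix lam (fromBlocks R S P Q) (fromRows G 0) (fromCols 1 0)).det = 0 := by
  obtain ⟨η, hη, hQη⟩ := exists_mulVec_eq_zero_iff.mpr hQ
  obtain ⟨u, hu⟩ := mulVec_surjective_iff_isUnit.mpr hG (S *ᵥ η)
  rw [← exists_mulVec_eq_zero_iff]
  refine ⟨Sum.elim (Sum.elim 0 η) u, fun h => hη ?_, ?_⟩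
  · funext i
    simpa using congrFun h (Sum.inl (Sum.inr i))
  · have hQη' : Q *ᵥ η = lam • η := by
      rw [sub_mulVec, smul_mulVec, one_mulVec, sub_eq_zero] at hQη
      exact hQη.symm
    ext ((i | i) | i) <;>
      simp [rosenbrockMatrix, fromBlocks_mulVec, fromRows_mulVec, sub_mulVec, smul_mulVec,
        hu, hQη']

end Rosenbrock

/-- If the linear system `(A,B,C)` with `CB` invertible is transformed via an invertible
coordinate change `U` into Byrnes–Isidori form (so that the internal dynamics matrix `Q`
arises), then the minimum phase condition `det [λI − A, B; C, 0] ≠ 0` for all `λ` with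
`Re λ ≥ 0` implies that every eigenvalue of `Q` has negative real part (`Q` is Hurwitz). -/
theorem stmt_5 {m k : ℕ}
    (A : Matrix (Fin m ⊕ Fin k) (Fin m ⊕ Fin k) ℝ)
    (B : Matrix (Fin m ⊕ Fin k) (Fin m) ℝ)
    (C : Matrix (Fin m) (Fin m ⊕ Fin k) ℝ)
    (hCB : IsUnit (C * B))
    (U : Matrix (Fin m ⊕ Fin k) (Fin m ⊕ Fin k) ℝ)
    (hU : IsUnit U)
    (R : Matrix (Fin m) (Fin m) ℝ) (S : Matrix (Fin m) (Fin k) ℝ)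
    (P : Matrix (Fin k) (Fin m) ℝ) (Q : Matrix (Fin k) (Fin k) ℝ)
    (hA : U * A * U⁻¹ = Matrix.fromBlocks R S P Q)
    (hB : U * B = Matrix.fromRows (C * B) (0 : Matrix (Fin k) (Fin m) ℝ))
    (hC : C * U⁻¹ = Matrix.fromCols (1 : Matrix (Fin m) (Fin m) ℝ)
        (0 : Matrix (Fin m) (Fin k) ℝ))
    (hmp : ∀ lam : ℂ, 0 ≤ lam.re →
        (Matrix.fromBlocks (lam • (1 : Matrix (Fin m ⊕ Fin k) (Fin m ⊕ Fin k) ℂ) -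
            A.map (algebraMap ℝ ℂ)) (B.map (algebraMap ℝ ℂ)) (C.map (algebraMap ℝ ℂ))
            (0 : Matrix (Fin m) (Fin m) ℂ)).det ≠ 0) :
    ∀ lam : ℂ, lam ∈ spectrum ℂ (Q.map (algebraMap ℝ ℂ)) → lam.re < 0 := by
  intro lam hlam
  by_contra! hre
  set f := algebraMap ℝ ℂ
  have hQ : (lam • 1 - Q.map f).det = 0 := by
    rwa [spectrum.mem_iff, Algebra.algebraMap_eq_smul_one, isUnit_iff_isUnit_det,
      isUnit_iff_ne_zero, not_not] at hlam
  have hUU : U.map f * U⁻¹.map f = 1 := by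
    rw [← Matrix.map_mul, mul_nonsing_inv U ((isUnit_iff_isUnit_det U).mp hU),
      Matrix.map_one f f.map_zero f.map_one]
  have hCB' : IsUnit ((C * B).map f) := hCB.map f.mapMatrix
  refine hmp lam hre ?_
  rw [← rosenbrockMatrix, ← det_rosenbrockMatrix_conj lam _ _ _ hUU, ← Matrix.map_mul,
    ← Matrix.map_mul, ← Matrix.map_mul, ← Matrix.map_mul, hA, hB, hC, fromBlocks_map,
    fromRows_map, fromCols_map]
  simpa using det_rosenbrockMatrix_byrnesIsidori_eq_zero (R.map f) (S.map f) (P.map f) hCB' hQ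
end
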